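/- arXiv:1701.00537 — 6 statements merged into one kernel-verified Lean document; each statement's English description precedes it below -/
import Mathlib

section
/- Let Y be a complex Hilbert space and V ⊆ Y a subspace. Let T, T₀ : Y → Y be bounded linear operators such that (i) T − T₀ is a compact operator; (ii) there exist t ∈ [0, π] and c > 0 with Re(e^{−it}(T₀f, f)) ≥ c‖f‖² for all f ∈ Y; (iii) Im((T₀f, f)) ≥ 0 for all f ∈ Y; and (iv) Im((Tf, f)) > 0 for every nonzero f in the closure of V. Then there exists a constant c' > 0 such that |(Tf, f)| ≥ c'‖f‖² for all f ∈ V. -/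
/-! If the bound failed, there would be unit vectors `gₙ ∈ V` with `(T gₙ, gₙ) → 0`. Along an
ultrafilter they converge weakly to some `f ∈ closure V`, and compactness of `K = T - T₀` gives
`(K gₙ, gₙ) → (K f, f)`, hence `(T₀ gₙ, gₙ) → -(K f, f)`. Coercivity of `T₀` keeps this limit
away from `0`, so `f ≠ 0`. Applying `Im (T₀ ·, ·) ≥ 0` to the defects `gₙ - f` gives
`Im (T₀ f, f) ≤ Im (-(K f, f))`, that is `Im (T f, f) ≤ 0`, contradicting (iv). -/

open scoped ComplexInnerProductSpace InnerProductSpace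
open Filter Topology

section WeakConvergence

variable (𝕜 : Type*) {E F ι : Type*} [RCLike 𝕜] [NormedAddCommGroup E] [InnerProductSpace 𝕜 E]
  [NormedAddCommGroup F] [InnerProductSpace 𝕜 F]

def WeakTendsto (g : ι → E) (l : Filter ι) (f : E) : Prop :=
  ∀ y, Tendsto (fun i => ⟪g i, y⟫_𝕜) l (𝓝 ⟪f, y⟫_𝕜)

variable {𝕜} {g : ι → E} {l : Filter ι} {f : E}

theorem Filter.Tendsto.weakTendsto (hg : Tendsto g l (𝓝 f)) : WeakTendsto 𝕜 g l f :=
  fun _ => hg.inner tendsto_const_nhds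

theorem WeakTendsto.unique [l.NeBot] {f' : E} (hf : WeakTendsto 𝕜 g l f)
    (hf' : WeakTendsto 𝕜 g l f') : f = f' :=
  ext_inner_right 𝕜 fun y => tendsto_nhds_unique (hf y) (hf' y)

theorem WeakTendsto.map [CompleteSpace E] [CompleteSpace F] (A : E →L[𝕜] F)
    (hg : WeakTendsto 𝕜 g l f) : WeakTendsto 𝕜 (fun i => A (g i)) l (A f) := by
  intro y
  simp only [← ContinuousLinearMap.adjoint_inner_right]
  exact hg _

theorem WeakTendsto.tendsto_inner_right (hg : WeakTendsto 𝕜 g l f) (y : E) :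
    Tendsto (fun i => ⟪y, g i⟫_𝕜) l (𝓝 ⟪y, f⟫_𝕜) := by
  simp only [← inner_conj_symm y]
  exact (continuous_star.tendsto _).comp (hg y)

theorem WeakTendsto.tendsto_inner_of_tendsto {h : ι → E} {h₀ : E} {R : ℝ}
    (hg : WeakTendsto 𝕜 g l f) (hR : ∀ i, ‖g i‖ ≤ R) (hh : Tendsto h l (𝓝 h₀)) :
    Tendsto (fun i => ⟪g i, h i⟫_𝕜) l (𝓝 ⟪f, h₀⟫_𝕜) := by
  have hsmall : Tendsto (fun i => ⟪g i, h i - h₀⟫_𝕜) l (𝓝 0) := by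
    refine squeeze_zero_norm (fun i => (norm_inner_le_norm _ _).trans
      (mul_le_mul_of_nonneg_right (hR i) (norm_nonneg _))) ?_
    simpa using (tendsto_sub_nhds_zero_iff.mpr hh).norm.const_mul R
  simpa [inner_sub_right] using hsmall.add (hg h₀)

theorem WeakTendsto.mem_closure [CompleteSpace E] [l.NeBot] {K : Submodule 𝕜 E}
    (hg : WeakTendsto 𝕜 g l f) (hgK : ∀ i, g i ∈ K) : f ∈ closure (K : Set E) := by
  rw [← Submodule.topologicalClosure_coe, SetLike.mem_coe,
    ← Submodule.orthogonal_orthogonal_eq_closure, Submodule.mem_orthogonal']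
  intro y hy
  refine tendsto_nhds_unique (hg y) ?_
  simp only [Submodule.inner_right_of_mem_orthogonal (hgK _) hy, tendsto_const_nhds]

theorem exists_weakTendsto_of_norm_le [CompleteSpace E] (U : Ultrafilter ι) {R : ℝ}
    (hR : ∀ i, ‖g i‖ ≤ R) : ∃ f, WeakTendsto 𝕜 g U f := by
  let φ : ι → WeakDual 𝕜 E := fun i => StrongDual.toWeakDual (innerSL 𝕜 (g i))
  have hφ : ∀ i, φ i ∈ WeakDual.toStrongDual ⁻¹' Metric.closedBall 0 R := fun i => by
    simpa [φ, innerSL_apply_norm] using hR i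
  obtain ⟨ψ, -, hψ⟩ := (WeakDual.isCompact_closedBall (𝕜 := 𝕜) (E := E) 0 R).ultrafilter_le_nhds
    (U.map φ) (tendsto_principal.mpr (.of_forall hφ))
  refine ⟨(InnerProductSpace.toDual 𝕜 E).symm (WeakDual.toStrongDual ψ), fun y => ?_⟩
  rw [InnerProductSpace.toDual_symm_apply]
  exact ((WeakDual.eval_continuous y).tendsto ψ).comp hψ

theorem IsCompactOperator.tendsto_of_weakTendsto [CompleteSpace E] [CompleteSpace F]
    {A : E →L[𝕜] F} (hA : IsCompactOperator A) (U : Ultrafilter ι) {R : ℝ}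
    (hR : ∀ i, ‖g i‖ ≤ R) (hg : WeakTendsto 𝕜 g U f) :
    Tendsto (fun i => A (g i)) U (𝓝 (A f)) := by
  obtain ⟨C, hC, hAC⟩ := hA.image_closedBall_subset_compact R
  have hmem : ∀ i, A (g i) ∈ C := fun i =>
    hAC ⟨g i, by simpa using hR i, rfl⟩
  obtain ⟨z, -, hz⟩ := hC.ultrafilter_le_nhds (U.map fun i => A (g i))
    (tendsto_principal.mpr (.of_forall hmem))
  rwa [← (hg.map A).unique (Filter.Tendsto.weakTendsto hz)] at hz

theorem WeakTendsto.tendsto_inner_map_sub [CompleteSpace E] (A : E →L[𝕜] E) {z : 𝕜}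
    (hg : WeakTendsto 𝕜 g l f) (hz : Tendsto (fun i => ⟪g i, A (g i)⟫_𝕜) l (𝓝 z)) :
    Tendsto (fun i => ⟪g i - f, A (g i - f)⟫_𝕜) l (𝓝 (z - ⟪f, A f⟫_𝕜)) := by
  have := ((hz.sub (hg (A f))).sub ((hg.map A).tendsto_inner_right f)).add_const ⟪f, A f⟫_𝕜
  convert this using 2
  · simp only [map_sub, inner_sub_left, inner_sub_right]
    ring
  · ring

end WeakConvergence

section Coercivity

variable {E ι : Type*} [NormedAddCommGroup E] [InnerProductSpace ℂ E]

theorem WeakTendsto.im_inner_map_le [CompleteSpace E] {l : Filter ι} [l.NeBot] {g : ι → E}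
    {f : E} {A : E →L[ℂ] E} {z : ℂ} (hA : ∀ x, 0 ≤ (⟪x, A x⟫).im) (hg : WeakTendsto ℂ g l f)
    (hz : Tendsto (fun i => ⟪g i, A (g i)⟫) l (𝓝 z)) : (⟪f, A f⟫).im ≤ z.im := by
  have : 0 ≤ (z - ⟪f, A f⟫).im :=
    ge_of_tendsto' ((Complex.continuous_im.tendsto _).comp (hg.tendsto_inner_map_sub A hz))
      fun i => hA _
  simpa using this

theorem exists_mem_closure_ne_zero_im_inner_nonpos [CompleteSpace E] {V : Submodule ℂ E}
    {T T₀ : E →L[ℂ] E} (hcompact : IsCompactOperator (T - T₀)) {w : ℂ} {c : ℝ} (hc : 0 < c)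
    (hcoercive : ∀ f, c * ‖f‖ ^ 2 ≤ (w * ⟪f, T₀ f⟫).re) (him₀ : ∀ f, 0 ≤ (⟪f, T₀ f⟫).im)
    (U : Ultrafilter ι) {g : ι → E} (hgV : ∀ i, g i ∈ V) (hg : ∀ i, ‖g i‖ = 1)
    (hT : Tendsto (fun i => ⟪g i, T (g i)⟫) U (𝓝 0)) :
    ∃ f ∈ closure (V : Set E), f ≠ 0 ∧ (⟪f, T f⟫).im ≤ 0 := by
  have hR : ∀ i, ‖g i‖ ≤ 1 := fun i => (hg i).le
  obtain ⟨f, hf⟩ := exists_weakTendsto_of_norm_le (𝕜 := ℂ) U hR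
  have hK : Tendsto (fun i => ⟪g i, (T - T₀) (g i)⟫) U (𝓝 ⟪f, (T - T₀) f⟫) :=
    hf.tendsto_inner_of_tendsto hR (hcompact.tendsto_of_weakTendsto U hR hf)
  have hT₀ : Tendsto (fun i => ⟪g i, T₀ (g i)⟫) U (𝓝 (-⟪f, (T - T₀) f⟫)) := by
    simpa [inner_sub_right] using hT.sub hK
  have hre : c ≤ (w * -⟪f, (T - T₀) f⟫).re :=
    ge_of_tendsto' ((Complex.continuous_re.tendsto _).comp (hT₀.const_mul w)) fun i => by
      simpa [hg i] using hcoercive (g i)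
  have hf0 : f ≠ 0 := by
    rintro rfl
    simp only [map_zero, inner_zero_left, neg_zero, mul_zero, Complex.zero_re] at hre
    linarith
  refine ⟨f, hf.mem_closure hgV, hf0, ?_⟩
  have := hf.im_inner_map_le him₀ hT₀
  simp only [sub_apply, inner_sub_right, neg_sub, Complex.sub_im] at this ⊢
  linarith

end Coercivity

section Normalization

variable {𝕜 E : Type*} [RCLike 𝕜] [NormedAddCommGroup E] [InnerProductSpace 𝕜 E]

theorem norm_inner_map_smul (T : E →L[𝕜] E) (a : 𝕜) (x : E) :
    ‖⟪a • x, T (a • x)⟫_𝕜‖ = ‖a‖ ^ 2 * ‖⟪x, T x⟫_𝕜‖ := by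
  simp only [map_smul, inner_smul_left, inner_smul_right, norm_mul, RCLike.norm_conj]
  ring

theorem exists_tendsto_inner_map_of_not_coercive {V : Submodule 𝕜 E} {T : E →L[𝕜] E}
    (h : ¬ ∃ c' > 0, ∀ f ∈ V, c' * ‖f‖ ^ 2 ≤ ‖⟪f, T f⟫_𝕜‖) :
    ∃ g : ℕ → E, (∀ n, g n ∈ V) ∧ (∀ n, ‖g n‖ = 1) ∧
      Tendsto (fun n => ⟪g n, T (g n)⟫_𝕜) atTop (𝓝 0) := by
  push Not at h
  have hseq : ∀ n : ℕ, ∃ g ∈ V, ‖g‖ = 1 ∧ ‖⟪g, T g⟫_𝕜‖ < 1 / (n + 1) := by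
    intro n
    obtain ⟨f, hfV, hf⟩ := h (1 / (n + 1)) (by positivity)
    have hf0 : f ≠ 0 := by
      rintro rfl
      simp at hf
    refine ⟨(‖f‖⁻¹ : 𝕜) • f, V.smul_mem _ hfV, norm_smul_inv_norm hf0, ?_⟩
    have hfn : 0 < ‖f‖ := norm_pos_iff.mpr hf0
    rw [norm_inner_map_smul, norm_inv, RCLike.norm_ofReal, abs_norm, inv_pow,
      inv_mul_lt_iff₀ (by positivity)]
    linarith
  choose g hgV hg hsmall using hseq
  exact ⟨g, hgV, hg, squeeze_zero_norm (fun n => (hsmall n).le)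
    tendsto_one_div_add_atTop_nhds_zero_nat⟩

end Normalization

/-- The paper's inner product `(f, g)`, linear in the first argument, is `⟪g, f⟫` here. -/
theorem middle_operator_coercive_general
    {Y : Type*} [NormedAddCommGroup Y] [InnerProductSpace ℂ Y] [CompleteSpace Y]
    (V : Submodule ℂ Y) (T T₀ : Y →L[ℂ] Y)
    (hcompact : IsCompactOperator (⇑(T - T₀)))
    (t : ℝ)
    (c : ℝ) (hc : 0 < c)
    (hcoercive : ∀ f : Y, c * ‖f‖ ^ 2 ≤ (Complex.exp (-(Complex.I * t)) * ⟪f, T₀ f⟫).re)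
    (him₀ : ∀ f : Y, 0 ≤ (⟪f, T₀ f⟫).im)
    (him : ∀ f ∈ closure (V : Set Y), f ≠ 0 → 0 < (⟪f, T f⟫).im) :
    ∃ c' > 0, ∀ f ∈ V, c' * ‖f‖ ^ 2 ≤ ‖⟪f, T f⟫‖ := by
  by_contra h
  obtain ⟨g, hgV, hg, hT⟩ := exists_tendsto_inner_map_of_not_coercive h
  obtain ⟨f, hfV, hf0, hf⟩ := exists_mem_closure_ne_zero_im_inner_nonpos hcompact hc hcoercive
    him₀ (Ultrafilter.of atTop) hgV hg (hT.mono_left (Ultrafilter.of_le _))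
  exact (him f hfV hf0).not_ge hf

/-- Coercivity of the middle operator `T`: if `T - T₀` is compact, `T₀` is coercive after
rotation by `e^{-it}`, `Im (T₀ f, f) ≥ 0`, and `Im (T f, f) > 0` on the closure of `V`
minus zero, then `|(T f, f)| ≥ c' ‖f‖²` on `V`.  Here the paper's inner product `(f, g)`
(linear in the first argument) is `⟪g, f⟫` in Mathlib's convention. -/
theorem middle_operator_coercive
    {Y : Type*} [NormedAddCommGroup Y] [InnerProductSpace ℂ Y] [CompleteSpace Y]
    (V : Submodule ℂ Y) (T T₀ : Y →L[ℂ] Y)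
    (hcompact : IsCompactOperator (⇑(T - T₀)))
    (t : ℝ) (ht : t ∈ Set.Icc (0 : ℝ) Real.pi)
    (c : ℝ) (hc : 0 < c)
    (hcoercive : ∀ f : Y, c * ‖f‖ ^ 2 ≤ (Complex.exp (-(Complex.I * t)) * ⟪f, T₀ f⟫).re)
    (him₀ : ∀ f : Y, 0 ≤ (⟪f, T₀ f⟫).im)
    (him : ∀ f ∈ closure (V : Set Y), f ≠ 0 → 0 < (⟪f, T f⟫).im) :
    ∃ c' > 0, ∀ f ∈ V, c' * ‖f‖ ^ 2 ≤ ‖⟪f, T f⟫‖ :=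
  middle_operator_coercive_general V T T₀ hcompact t c hc hcoercive him₀ him
end

section
/- Let X and Y be complex Hilbert spaces, H : X → Y a bounded linear operator, and T : Y → Y a bounded linear operator satisfying the coercivity condition |(Tf, f)| ≥ c‖f‖² for all f ∈ range(H), where c > 0. Set F := H*TH : X → X. Suppose φ ∈ X satisfies φ = H*w for some nonzero w ∈ Y. Then inf{ |(Fψ, ψ)| : ψ ∈ X, (ψ, φ) = 1 } ≥ c / ‖w‖², and in particular this infimum is strictly positive. -/
open scoped ComplexInnerProductSpace ENNReal InnerProductSpace

/-! Writing `(ψ, φ) = 1` with `φ = H* w` as `(Hψ, w) = 1`, Cauchy–Schwarz gives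
`‖Hψ‖ ≥ 1 / ‖w‖`, and `(Fψ, ψ) = (T Hψ, Hψ)`, so coercivity of `T` on the range of `H`
yields `|(Fψ, ψ)| ≥ c ‖Hψ‖² ≥ c / ‖w‖²`. -/

theorem one_le_norm_mul_norm_of_inner_eq_one {𝕜 E : Type*} [RCLike 𝕜] [NormedAddCommGroup E]
    [InnerProductSpace 𝕜 E] {w v : E} (h : ⟪w, v⟫_𝕜 = 1) : 1 ≤ ‖w‖ * ‖v‖ := by
  simpa [h] using norm_inner_le_norm (𝕜 := 𝕜) w v

theorem div_sq_le_mul_sq_of_one_le_mul {c a b : ℝ} (hc : 0 ≤ c) (h : 1 ≤ a * b) :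
    c / a ^ 2 ≤ c * b ^ 2 := by
  have ha : a ≠ 0 := by rintro rfl; linarith
  calc c / a ^ 2 = c / a ^ 2 * 1 := (mul_one _).symm
    _ ≤ c / a ^ 2 * (a * b) ^ 2 := by gcongr; exact one_le_pow₀ h
    _ = c * b ^ 2 := by field_simp

section AdjointSandwich

variable {𝕜 E F : Type*} [RCLike 𝕜]
  [NormedAddCommGroup E] [InnerProductSpace 𝕜 E] [CompleteSpace E]
  [NormedAddCommGroup F] [InnerProductSpace 𝕜 F] [CompleteSpace F]

theorem inner_adjoint_comp_comp_apply_self (H : E →L[𝕜] F) (T : F →L[𝕜] F) (ψ : E) :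
    ⟪ψ, (ContinuousLinearMap.adjoint H ∘L (T ∘L H)) ψ⟫_𝕜 = ⟪H ψ, T (H ψ)⟫_𝕜 := by
  simp [ContinuousLinearMap.adjoint_inner_right]

theorem div_norm_sq_le_norm_inner_adjoint_comp_comp {H : E →L[𝕜] F} {T : F →L[𝕜] F} {c : ℝ}
    (hc : 0 ≤ c) (hT : ∀ f ∈ LinearMap.range (H : E →ₗ[𝕜] F), c * ‖f‖ ^ 2 ≤ ‖⟪f, T f⟫_𝕜‖)
    {w : F} {ψ : E} (hψ : ⟪ContinuousLinearMap.adjoint H w, ψ⟫_𝕜 = 1) :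
    c / ‖w‖ ^ 2 ≤ ‖⟪ψ, (ContinuousLinearMap.adjoint H ∘L (T ∘L H)) ψ⟫_𝕜‖ := by
  rw [ContinuousLinearMap.adjoint_inner_left] at hψ
  rw [inner_adjoint_comp_comp_apply_self]
  calc c / ‖w‖ ^ 2 ≤ c * ‖H ψ‖ ^ 2 :=
        div_sq_le_mul_sq_of_one_le_mul hc (one_le_norm_mul_norm_of_inner_eq_one hψ)
    _ ≤ ‖⟪H ψ, T (H ψ)⟫_𝕜‖ := hT (H ψ) ⟨ψ, rfl⟩

end AdjointSandwich

/-- The paper's `(a, b)` is Mathlib's `⟪b, a⟫`, so `(ψ, φ) = 1` reads `⟪φ, ψ⟫ = 1` and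
`(F ψ, ψ)` reads `⟪ψ, F ψ⟫`; the infimum is taken in `ℝ≥0∞`, where an empty infimum is `∞`. -/
theorem inf_criterion_lower_bound
    {X Y : Type*} [NormedAddCommGroup X] [InnerProductSpace ℂ X] [CompleteSpace X]
    [NormedAddCommGroup Y] [InnerProductSpace ℂ Y] [CompleteSpace Y]
    (H : X →L[ℂ] Y) (T : Y →L[ℂ] Y) (c : ℝ) (hc : 0 < c)
    (hT : ∀ f ∈ LinearMap.range (H : X →ₗ[ℂ] Y), c * ‖f‖ ^ 2 ≤ ‖⟪f, T f⟫‖)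
    (F : X →L[ℂ] X) (hF : F = (ContinuousLinearMap.adjoint H).comp (T.comp H))
    (φ : X) (w : Y) (hw : w ≠ 0) (hφ : φ = ContinuousLinearMap.adjoint H w) :
    (ENNReal.ofReal (c / ‖w‖ ^ 2) ≤
        ⨅ ψ : {ψ : X // ⟪φ, ψ⟫ = 1}, ENNReal.ofReal ‖⟪(ψ : X), F (ψ : X)⟫‖) ∧
      (0 < ⨅ ψ : {ψ : X // ⟪φ, ψ⟫ = 1}, ENNReal.ofReal ‖⟪(ψ : X), F (ψ : X)⟫‖) := by
  subst hF hφ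
  have lower_bound : ENNReal.ofReal (c / ‖w‖ ^ 2) ≤
      ⨅ ψ : {ψ : X // ⟪ContinuousLinearMap.adjoint H w, ψ⟫ = 1},
        ENNReal.ofReal ‖⟪(ψ : X), (ContinuousLinearMap.adjoint H ∘L (T ∘L H)) ψ⟫‖ :=
    le_iInf fun ψ => ENNReal.ofReal_le_ofReal <|
      div_norm_sq_le_norm_inner_adjoint_comp_comp hc.le hT ψ.2
  have hw_pos : 0 < ‖w‖ := norm_pos_iff.mpr hw
  exact ⟨lower_bound, (ENNReal.ofReal_pos.mpr (by positivity)).trans_le lower_bound⟩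
end

section
/- Let X and Y be complex Hilbert spaces, H : X → Y a bounded linear operator, and T : Y → Y a bounded linear operator satisfying |(Tf, f)| ≥ c‖f‖² for all f ∈ range(H), where c > 0. Set F := H*TH. If φ ∈ X satisfies φ = H*w for some nonzero w ∈ Y, then |(Fφ, φ)| ≥ c‖φ‖⁴ / ‖w‖². -/
open scoped InnerProductSpace ComplexInnerProductSpace

namespace ContinuousLinearMap

variable {𝕜 E F : Type*} [RCLike 𝕜]
  [NormedAddCommGroup E] [InnerProductSpace 𝕜 E] [CompleteSpace E]
  [NormedAddCommGroup F] [InnerProductSpace 𝕜 F] [CompleteSpace F]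

theorem inner_adjoint_comp_comp_apply (H : E →L[𝕜] F) (T : F →L[𝕜] F) (x : E) :
    ⟪x, (adjoint H).comp (T.comp H) x⟫_𝕜 = ⟪H x, T (H x)⟫_𝕜 := by
  simp only [comp_apply, adjoint_inner_right]

theorem norm_adjoint_apply_sq_le (H : E →L[𝕜] F) (w : F) :
    ‖adjoint H w‖ ^ 2 ≤ ‖H (adjoint H w)‖ * ‖w‖ := by
  calc ‖adjoint H w‖ ^ 2 = ‖⟪adjoint H w, adjoint H w⟫_𝕜‖ := by
        rw [inner_self_eq_norm_sq_to_K, norm_pow, RCLike.norm_ofReal, abs_norm]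
    _ = ‖⟪H (adjoint H w), w⟫_𝕜‖ := by rw [adjoint_inner_right]
    _ ≤ ‖H (adjoint H w)‖ * ‖w‖ := norm_inner_le_norm _ _

end ContinuousLinearMap

/-- The paper's inner product `(a, b)` (linear in the first argument) is `⟪b, a⟫` in Mathlib's
convention, so `(F φ, φ)` reads `⟪φ, F φ⟫`. -/
theorem indicator_lower_bound_general
    {X Y : Type*} [NormedAddCommGroup X] [InnerProductSpace ℂ X] [CompleteSpace X]
    [NormedAddCommGroup Y] [InnerProductSpace ℂ Y] [CompleteSpace Y]
    (H : X →L[ℂ] Y) (T : Y →L[ℂ] Y) (c : ℝ) (hc : 0 < c)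
    (hT : ∀ f ∈ LinearMap.range (H : X →ₗ[ℂ] Y), c * ‖f‖ ^ 2 ≤ ‖⟪f, T f⟫‖)
    (F : X →L[ℂ] X) (hF : F = (ContinuousLinearMap.adjoint H).comp (T.comp H))
    (φ : X) (w : Y) (hφ : φ = ContinuousLinearMap.adjoint H w) :
    c * ‖φ‖ ^ 4 / ‖w‖ ^ 2 ≤ ‖⟪φ, F φ⟫‖ := by
  have hφH : ‖φ‖ ^ 2 ≤ ‖H φ‖ * ‖w‖ := hφ ▸ ContinuousLinearMap.norm_adjoint_apply_sq_le H w
  have hFφ : c * ‖H φ‖ ^ 2 ≤ ‖⟪φ, F φ⟫‖ := by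
    rw [hF, ContinuousLinearMap.inner_adjoint_comp_comp_apply]
    exact hT _ ⟨φ, rfl⟩
  refine div_le_of_le_mul₀ (by positivity) (norm_nonneg _) ?_
  calc c * ‖φ‖ ^ 4 = c * (‖φ‖ ^ 2) ^ 2 := by ring
    _ ≤ c * (‖H φ‖ * ‖w‖) ^ 2 := by gcongr
    _ = c * ‖H φ‖ ^ 2 * ‖w‖ ^ 2 := by ring
    _ ≤ ‖⟪φ, F φ⟫‖ * ‖w‖ ^ 2 := by gcongr

/-- Lower bound of the indicator for sampling points inside the scatterer (abstract core of
Theorem 2.1): if `F = H* T H` with `T` coercive on the range of `H`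
(`|(T f, f)| ≥ c ‖f‖²` there) and `φ = H* w` with `w ≠ 0`, then
`|(F φ, φ)| ≥ c ‖φ‖⁴ / ‖w‖²`.  The paper's inner product `(a, b)` (linear in the first
argument) is `⟪b, a⟫` in Mathlib's convention, so `(F φ, φ)` reads `⟪φ, F φ⟫`. -/
theorem indicator_lower_bound
    {X Y : Type*} [NormedAddCommGroup X] [InnerProductSpace ℂ X] [CompleteSpace X]
    [NormedAddCommGroup Y] [InnerProductSpace ℂ Y] [CompleteSpace Y]
    (H : X →L[ℂ] Y) (T : Y →L[ℂ] Y) (c : ℝ) (hc : 0 < c)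
    (hT : ∀ f ∈ LinearMap.range (H : X →ₗ[ℂ] Y), c * ‖f‖ ^ 2 ≤ ‖⟪f, T f⟫‖)
    (F : X →L[ℂ] X) (hF : F = (ContinuousLinearMap.adjoint H).comp (T.comp H))
    (φ : X) (w : Y) (hw : w ≠ 0) (hφ : φ = ContinuousLinearMap.adjoint H w) :
    c * ‖φ‖ ^ 4 / ‖w‖ ^ 2 ≤ ‖⟪φ, F φ⟫‖ :=
  indicator_lower_bound_general H T c hc hT F hF φ w hφ
end

section
/- Let X be a complex Hilbert space, α > 0, and let F, R : X → X be bounded linear operators with R self-adjoint and nonnegative (i.e., (Rg, g) ≥ 0 for all g ∈ X), satisfying F − F* − iα F*F = 2iR. Then for every g ∈ X, (α/2)‖Fg‖² ≤ Im((Fg, g)) ≤ |(Fg, g)| ≤ ‖g‖ · ‖Fg‖. -/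
open scoped ComplexInnerProductSpace

/-!
Pair the identity `F - F* - iα F*F = 2iR` with `g`. Since `(F* g, g)` is the conjugate of
`(F g, g)` and `(F*F g, g) = ‖F g‖²`, the left side is `i (2 Im (F g, g) - α ‖F g‖²)`, so
`(R g, g) = Im (F g, g) - (α/2) ‖F g‖²` is real, and its nonnegativity is the first inequality.
The other two are `Im z ≤ |z|` and Cauchy–Schwarz. The paper's `(F g, g)`, linear in the first
slot, is Mathlib's `⟪g, F g⟫`.
-/

namespace ContinuousLinearMap

variable {X : Type*} [NormedAddCommGroup X] [InnerProductSpace ℂ X] [CompleteSpace X]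

theorem inner_sub_adjoint_apply_self (F : X →L[ℂ] X) (g : X) :
    ⟪g, (F - adjoint F) g⟫ = (2 * (⟪g, F g⟫).im : ℝ) * Complex.I := by
  rw [sub_apply, inner_sub_right, adjoint_inner_right, ← inner_conj_symm (F g) g,
    Complex.sub_conj]

theorem inner_adjoint_comp_self_apply_self (F : X →L[ℂ] X) (g : X) :
    ⟪g, (adjoint F ∘L F) g⟫ = ((‖F g‖ ^ 2 : ℝ) : ℂ) := by
  rw [comp_apply, adjoint_inner_right, inner_self_eq_norm_sq_to_K]
  norm_cast

theorem inner_apply_self_eq_of_sub_adjoint_sub_eq {α : ℝ} {F R : X →L[ℂ] X}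
    (hid : F - adjoint F - ((Complex.I * α) • (adjoint F ∘L F)) = (2 * Complex.I) • R)
    (g : X) :
    ⟪g, R g⟫ = ((⟪g, F g⟫).im - α / 2 * ‖F g‖ ^ 2 : ℝ) := by
  have hpair := congrArg (fun T : X →L[ℂ] X => ⟪g, T g⟫) hid
  rw [sub_apply, inner_sub_right, smul_apply, inner_smul_right, inner_sub_adjoint_apply_self,
    inner_adjoint_comp_self_apply_self, smul_apply, inner_smul_right] at hpair
  have hI : (2 * Complex.I) ≠ 0 := by simp
  apply mul_left_cancel₀ hI
  rw [← hpair]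
  push_cast
  ring

end ContinuousLinearMap

theorem indicator_inequality_chain_general
    {X : Type*} [NormedAddCommGroup X] [InnerProductSpace ℂ X] [CompleteSpace X]
    (α : ℝ) (F R : X →L[ℂ] X)
    (hRnonneg : ∀ g : X, 0 ≤ (⟪g, R g⟫).re)
    (hid : F - ContinuousLinearMap.adjoint F -
        ((Complex.I * α) • ((ContinuousLinearMap.adjoint F).comp F)) =
      (2 * Complex.I) • R) :
    ∀ g : X, α / 2 * ‖F g‖ ^ 2 ≤ (⟪g, F g⟫).im ∧ (⟪g, F g⟫).im ≤ ‖⟪g, F g⟫‖ ∧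
      ‖⟪g, F g⟫‖ ≤ ‖g‖ * ‖F g‖ := by
  intro g
  have hpos := hRnonneg g
  rw [ContinuousLinearMap.inner_apply_self_eq_of_sub_adjoint_sub_eq hid, Complex.ofReal_re] at hpos
  exact ⟨by linarith, (le_abs_self _).trans (Complex.abs_im_le_norm _),
    norm_inner_le_norm g (F g)⟩

/-- If `F - F* - iα F*F = 2iR` with `α > 0` and `R` self-adjoint and nonnegative, then for
every `g`, `(α/2) ‖F g‖² ≤ Im (F g, g) ≤ |(F g, g)| ≤ ‖g‖ ‖F g‖`.
The paper's inner product `(a, b)` (linear in the first argument) is `⟪b, a⟫` in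
Mathlib's convention, so `(F g, g)` reads `⟪g, F g⟫` and `(R g, g)` reads `⟪g, R g⟫`. -/
theorem indicator_inequality_chain
    {X : Type*} [NormedAddCommGroup X] [InnerProductSpace ℂ X] [CompleteSpace X]
    (α : ℝ) (hα : 0 < α) (F R : X →L[ℂ] X) (hR : IsSelfAdjoint R)
    (hRnonneg : ∀ g : X, 0 ≤ (⟪g, R g⟫).re)
    (hid : F - ContinuousLinearMap.adjoint F -
        ((Complex.I * α) • ((ContinuousLinearMap.adjoint F).comp F)) =
      (2 * Complex.I) • R) :
    ∀ g : X, α / 2 * ‖F g‖ ^ 2 ≤ (⟪g, F g⟫).im ∧ (⟪g, F g⟫).im ≤ ‖⟪g, F g⟫‖ ∧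
      ‖⟪g, F g⟫‖ ≤ ‖g‖ * ‖F g‖ :=
  indicator_inequality_chain_general α F R hRnonneg hid
end

section
/- Let n ≥ 2, let σ be the surface measure on the unit sphere S^{n−1} ⊂ ℝⁿ, and let u ∈ L²(S^{n−1} × S^{n−1}, σ ⊗ σ) satisfy the reciprocity relation u(x̂, θ) = u(−θ, −x̂) for σ ⊗ σ-almost every (x̂, θ). Then for every k > 0 and every z ∈ ℝⁿ, ∫_{S^{n−1}} | ∫_{S^{n−1}} u(x̂, θ) e^{ik⟨z, x̂⟩} dσ(x̂) |² dσ(θ) = ∫_{S^{n−1}} | ∫_{S^{n−1}} u(x̂, θ) e^{−ik⟨z, θ⟩} dσ(θ) |² dσ(x̂). -/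
/-!
Negation is an automorphism of the surface measure `σ`. Substituting `θ ↦ -θ` in the inner
integral and `x̂ ↦ -x̂` in the outer one turns `u(x̂, θ) = u(-θ, -x̂)` into an exchange of the
roles of `x̂` and `θ`, and the phase `e^{-ik⟨z,θ⟩}` becomes `e^{ik⟨z,x̂⟩}`.
-/

open scoped RealInnerProductSpace
open MeasureTheory

open Metric in
theorem MeasureTheory.Measure.measurePreserving_neg_toSphere {E : Type*} [NormedAddCommGroup E]
    [NormedSpace ℝ E] [MeasurableSpace E] [BorelSpace E] (μ : Measure E) [μ.IsNegInvariant] :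
    MeasurePreserving (MeasurableEquiv.neg (sphere (0 : E) 1)) μ.toSphere μ.toSphere := by
  refine ⟨measurable_neg, Measure.ext fun s hs => ?_⟩
  have hcoe : Subtype.val '' (-s) = -(Subtype.val '' s : Set E) := by
    simp only [← Set.image_neg_eq_neg, Set.image_image, coe_neg_sphere]
  rw [MeasurableEquiv.neg_apply, Measure.map_apply measurable_neg hs,
    toSphere_apply' _ (measurable_neg hs), toSphere_apply' _ hs, Set.neg_preimage, hcoe,
    Set.smul_neg, measure_neg]

section Reciprocity

variable {α E F R : Type*} [MeasurableSpace α] {μ : Measure α} [NormedAddCommGroup E]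
  [NormedSpace ℝ E] [NormedAddCommGroup F] [NormedSpace ℝ F] [NormedRing R] [NormedSpace ℝ R]
  {e : α ≃ᵐ α}

theorem MeasureTheory.MeasurePreserving.integral_integral_comp_comp
    (he : MeasurePreserving e μ μ) (K : α → α → E) (G : E → F) :
    ∫ x, G (∫ θ, K (e θ) (e x) ∂μ) ∂μ = ∫ x, G (∫ θ, K θ x ∂μ) ∂μ := by
  have inner (x : α) : ∫ θ, K (e θ) x ∂μ = ∫ θ, K θ x ∂μ := he.integral_comp' (K · x)
  simp only [inner]
  exact he.integral_comp' fun x => G (∫ θ, K θ x ∂μ)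

theorem MeasureTheory.MeasurePreserving.integral_integral_mul_of_reciprocity [SFinite μ]
    (he : MeasurePreserving e μ μ) {u : α × α → R}
    (hrec : ∀ᵐ p ∂μ.prod μ, u p = u (e p.2, e p.1)) (φ : α → R) (G : R → F) :
    ∫ x, G (∫ θ, u (x, θ) * φ (e θ) ∂μ) ∂μ = ∫ θ, G (∫ x, u (x, θ) * φ x ∂μ) ∂μ := by
  calc ∫ x, G (∫ θ, u (x, θ) * φ (e θ) ∂μ) ∂μ
      = ∫ x, G (∫ θ, u (e θ, e x) * φ (e θ) ∂μ) ∂μ := by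
        refine integral_congr_ae ?_
        filter_upwards [Measure.ae_ae_of_ae_prod hrec] with x hx
        rw [integral_congr_ae (hx.mono fun θ hθ => congrArg (· * φ (e θ)) hθ)]
    _ = ∫ θ, G (∫ x, u (x, θ) * φ x ∂μ) ∂μ :=
        he.integral_integral_comp_comp (fun x θ => u (x, θ) * φ x) G

end Reciprocity

theorem osm_indicator_eq_of_reciprocity_general (n : ℕ)
    (u : (Metric.sphere (0 : EuclideanSpace ℝ (Fin n)) 1) ×
        (Metric.sphere (0 : EuclideanSpace ℝ (Fin n)) 1) → ℂ)
    (hrec : ∀ᵐ p ∂(((volume : Measure (EuclideanSpace ℝ (Fin n))).toSphere).prod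
        ((volume : Measure (EuclideanSpace ℝ (Fin n))).toSphere)),
      u p = u (-p.2, -p.1))
    (k : ℝ) (z : EuclideanSpace ℝ (Fin n)) :
    (∫ θ : Metric.sphere (0 : EuclideanSpace ℝ (Fin n)) 1,
        ‖∫ x : Metric.sphere (0 : EuclideanSpace ℝ (Fin n)) 1,
            u (x, θ) * Complex.exp (Complex.I * k * (⟪z, (x : EuclideanSpace ℝ (Fin n))⟫ : ℝ))
            ∂((volume : Measure (EuclideanSpace ℝ (Fin n))).toSphere)‖ ^ 2
        ∂((volume : Measure (EuclideanSpace ℝ (Fin n))).toSphere))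
      = ∫ x : Metric.sphere (0 : EuclideanSpace ℝ (Fin n)) 1,
          ‖∫ θ : Metric.sphere (0 : EuclideanSpace ℝ (Fin n)) 1,
              u (x, θ) *
                Complex.exp (-(Complex.I * k * (⟪z, (θ : EuclideanSpace ℝ (Fin n))⟫ : ℝ)))
              ∂((volume : Measure (EuclideanSpace ℝ (Fin n))).toSphere)‖ ^ 2
          ∂((volume : Measure (EuclideanSpace ℝ (Fin n))).toSphere) := by
  set φ : Metric.sphere (0 : EuclideanSpace ℝ (Fin n)) 1 → ℂ := fun x =>
    Complex.exp (Complex.I * k * (⟪z, (x : EuclideanSpace ℝ (Fin n))⟫ : ℝ))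
  have hφ_neg : ∀ θ : Metric.sphere (0 : EuclideanSpace ℝ (Fin n)) 1,
      Complex.exp (-(Complex.I * k * (⟪z, (θ : EuclideanSpace ℝ (Fin n))⟫ : ℝ)))
      = φ (-θ) := fun θ => by
    simp only [φ, coe_neg_sphere, inner_neg_right, Complex.ofReal_neg, mul_neg]
  simp only [hφ_neg]
  exact ((volume : Measure (EuclideanSpace ℝ (Fin n))).measurePreserving_neg_toSphere
    |>.integral_integral_mul_of_reciprocity hrec φ (‖·‖ ^ 2)).symm

/-- Identity (2.22): if the kernel `u ∈ L²(S^{n-1} × S^{n-1})` satisfies the reciprocity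
relation `u(x̂, θ) = u(-θ, -x̂)` a.e., then for every `k > 0` and `z ∈ ℝⁿ`,
`∫ |∫ u(x̂,θ) e^{ik⟨z,x̂⟩} dσ(x̂)|² dσ(θ) = ∫ |∫ u(x̂,θ) e^{-ik⟨z,θ⟩} dσ(θ)|² dσ(x̂)`,
where `σ` is the surface measure on the unit sphere `S^{n-1} ⊂ ℝⁿ`. -/
theorem osm_indicator_eq_of_reciprocity (n : ℕ) (hn : 2 ≤ n)
    (u : (Metric.sphere (0 : EuclideanSpace ℝ (Fin n)) 1) ×
        (Metric.sphere (0 : EuclideanSpace ℝ (Fin n)) 1) → ℂ)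
    (hu : MemLp u 2 (((volume : Measure (EuclideanSpace ℝ (Fin n))).toSphere).prod
        ((volume : Measure (EuclideanSpace ℝ (Fin n))).toSphere)))
    (hrec : ∀ᵐ p ∂(((volume : Measure (EuclideanSpace ℝ (Fin n))).toSphere).prod
        ((volume : Measure (EuclideanSpace ℝ (Fin n))).toSphere)),
      u p = u (-p.2, -p.1))
    (k : ℝ) (hk : 0 < k) (z : EuclideanSpace ℝ (Fin n)) :
    (∫ θ : Metric.sphere (0 : EuclideanSpace ℝ (Fin n)) 1,
        ‖∫ x : Metric.sphere (0 : EuclideanSpace ℝ (Fin n)) 1,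
            u (x, θ) * Complex.exp (Complex.I * k * (⟪z, (x : EuclideanSpace ℝ (Fin n))⟫ : ℝ))
            ∂((volume : Measure (EuclideanSpace ℝ (Fin n))).toSphere)‖ ^ 2
        ∂((volume : Measure (EuclideanSpace ℝ (Fin n))).toSphere))
      = ∫ x : Metric.sphere (0 : EuclideanSpace ℝ (Fin n)) 1,
          ‖∫ θ : Metric.sphere (0 : EuclideanSpace ℝ (Fin n)) 1,
              u (x, θ) *
                Complex.exp (-(Complex.I * k * (⟪z, (θ : EuclideanSpace ℝ (Fin n))⟫ : ℝ)))
              ∂((volume : Measure (EuclideanSpace ℝ (Fin n))).toSphere)‖ ^ 2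
          ∂((volume : Measure (EuclideanSpace ℝ (Fin n))).toSphere) :=
  osm_indicator_eq_of_reciprocity_general n u hrec k z
end

section
/- Let σ be the surface measure on the unit sphere S² ⊂ ℝ³ (so σ(S²) = 4π). Let u ∈ L²(S² × S², σ ⊗ σ) satisfy u(x̂, θ) = u(−θ, −x̂) for almost every (x̂, θ), and let F : L²(S²) → L²(S²) be the Hilbert–Schmidt integral operator (Fg)(x̂) = ∫_{S²} u(x̂, θ) g(θ) dσ(θ). Assume there exist α > 0 and a bounded self-adjoint operator R : L²(S²) → L²(S²) with (Rg, g) ≥ 0 for all g, such that F − F* − iα F*F = 2iR. For k > 0 and z ∈ ℝ³ define I²_OSM(z) := ∫_{S²} | ∫_{S²} u(x̂, θ) e^{ik⟨x̂, z⟩} dσ(x̂) |² dσ(θ), W(z) := ∫∫ e^{−ik⟨θ, z⟩} u(x̂, θ) e^{ik⟨x̂, z⟩} dσ(x̂) dσ(θ), I_RTM(z) := Im(W(z)), and I_new(z) := |W(z)|. Then for every z ∈ ℝ³: (α/2) · I²_OSM(z) ≤ I_RTM(z) ≤ I_new(z) ≤ 2√π · √(I²_OSM(z)). -/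
/-!
Test the far field operator against the plane wave `h = e^{-ik⟨·,z⟩}`. By Fubini
`W(z) = (h, Fh)`; reciprocity together with the invariance of `σ` under `x ↦ -x` gives
`I²_OSM(z) = ‖Fh‖²`; and `‖h‖² = σ(S²) = 4π`. Pairing `F - F* - iαF*F = 2iR` with `h` and taking
imaginary parts gives `2 Im W(z) - α‖Fh‖² = 2 Re (h, Rh) ≥ 0`. The middle inequality is
`Im w ≤ |w|`, and the last one is Cauchy–Schwarz, `|(h, Fh)| ≤ ‖h‖ ‖Fh‖`.
-/
open scoped RealInnerProductSpace ComplexInnerProductSpace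
open MeasureTheory

/-- The unit sphere `S² ⊂ ℝ³`. -/
abbrev UnitSphere3 := Metric.sphere (0 : EuclideanSpace ℝ (Fin 3)) 1

/-- The surface measure `σ` on the unit sphere `S² ⊂ ℝ³` (total mass `4π`). -/
noncomputable def sphMeasure : Measure UnitSphere3 :=
  (volume : Measure (EuclideanSpace ℝ (Fin 3))).toSphere

/-- The squared Orthogonality Sampling indicator
`I²_OSM(z) = ∫ |∫ u(x̂,θ) e^{ik⟨x̂,z⟩} dσ(x̂)|² dσ(θ)`. -/
noncomputable def IOSM2 (u : UnitSphere3 × UnitSphere3 → ℂ) (k : ℝ)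
    (z : EuclideanSpace ℝ (Fin 3)) : ℝ :=
  ∫ θ : UnitSphere3,
    ‖∫ x : UnitSphere3,
        u (x, θ) * Complex.exp (Complex.I * k * (⟪(x : EuclideanSpace ℝ (Fin 3)), z⟫ : ℝ))
        ∂sphMeasure‖ ^ 2 ∂sphMeasure

/-- The double integral `W(z) = ∫∫ e^{-ik⟨θ,z⟩} u(x̂,θ) e^{ik⟨x̂,z⟩} dσ(x̂) dσ(θ)`, so that
`I_RTM(z) = Im W(z)` and `I_new(z) = |W(z)|`. -/
noncomputable def Wker (u : UnitSphere3 × UnitSphere3 → ℂ) (k : ℝ)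
    (z : EuclideanSpace ℝ (Fin 3)) : ℂ :=
  ∫ θ : UnitSphere3,
    ∫ x : UnitSphere3,
      Complex.exp (-(Complex.I * k * (⟪(θ : EuclideanSpace ℝ (Fin 3)), z⟫ : ℝ))) * u (x, θ) *
        Complex.exp (Complex.I * k * (⟪(x : EuclideanSpace ℝ (Fin 3)), z⟫ : ℝ))
      ∂sphMeasure ∂sphMeasure

open scoped InnerProductSpace

section FarFieldOperator

variable {H : Type*} [NormedAddCommGroup H] [InnerProductSpace ℂ H] [CompleteSpace H]
  {F R : H →L[ℂ] H} {α : ℝ}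

open ContinuousLinearMap

theorem two_mul_im_inner_sub_mul_norm_sq
    (hid : F - adjoint F - (Complex.I * α) • (adjoint F ∘L F) = (2 * Complex.I) • R) (g : H) :
    2 * (⟪g, F g⟫_ℂ).im - α * ‖F g‖ ^ 2 = 2 * (⟪g, R g⟫_ℂ).re := by
  have h := congrArg (fun T : H →L[ℂ] H => (⟪g, T g⟫_ℂ).im) hid
  simp only [sub_apply, smul_apply, comp_apply, inner_sub_right, inner_smul_right,
    adjoint_inner_right, inner_self_eq_norm_sq_to_K, Complex.coe_algebraMap, ← Complex.ofReal_pow,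
    Complex.sub_im, Complex.mul_im, Complex.mul_re, Complex.I_re, Complex.I_im, Complex.ofReal_re,
    Complex.ofReal_im, Complex.re_ofNat, Complex.im_ofNat] at h
  have hsymm : (⟪F g, g⟫_ℂ).im = -(⟪g, F g⟫_ℂ).im :=
    inner_im_symm (𝕜 := ℂ) (F g) g
  linarith

theorem half_mul_norm_sq_le_im_inner
    (hid : F - adjoint F - (Complex.I * α) • (adjoint F ∘L F) = (2 * Complex.I) • R)
    {g : H} (hR : 0 ≤ (⟪g, R g⟫_ℂ).re) :
    α / 2 * ‖F g‖ ^ 2 ≤ (⟪g, F g⟫_ℂ).im := by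
  linarith [two_mul_im_inner_sub_mul_norm_sq hid g]

end FarFieldOperator

namespace MeasureTheory

variable {X : Type*} [MeasurableSpace X] {μ : Measure X}

theorem Lp.norm_sq_eq_integral_norm_sq {𝕜 : Type*} [RCLike 𝕜] {f : Lp 𝕜 2 μ} {g : X → 𝕜}
    (hfg : f =ᵐ[μ] g) : ‖f‖ ^ 2 = ∫ x, ‖g x‖ ^ 2 ∂μ := by
  rw [← inner_self_eq_norm_sq (𝕜 := 𝕜), L2.inner_def, ← integral_re (L2.integrable_inner f f)]
  refine integral_congr_ae ?_
  filter_upwards [hfg] with x hx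
  rw [hx]
  exact inner_self_eq_norm_sq (g x)

variable {u : X × X → ℂ} {T : Lp ℂ 2 μ →L[ℂ] Lp ℂ 2 μ}

theorem ae_eq_integral_kernel_of_ae_eq
    (hT : ∀ f : Lp ℂ 2 μ, T f =ᵐ[μ] fun x => ∫ θ, u (x, θ) * f θ ∂μ)
    {f : Lp ℂ 2 μ} {g : X → ℂ} (hfg : f =ᵐ[μ] g) :
    T f =ᵐ[μ] fun x => ∫ θ, u (x, θ) * g θ ∂μ := by
  filter_upwards [hT f] with x hx
  rw [hx]
  exact integral_congr_ae (hfg.mono fun θ hθ => congrArg (u (x, θ) * ·) hθ)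

theorem inner_apply_eq_integral_integral_kernel [SFinite μ]
    (hu : Integrable u (μ.prod μ))
    (hT : ∀ f : Lp ℂ 2 μ, T f =ᵐ[μ] fun x => ∫ θ, u (x, θ) * f θ ∂μ)
    {f : Lp ℂ 2 μ} {g : X → ℂ} (hfg : f =ᵐ[μ] g) {C : ℝ} (hgC : ∀ x, ‖g x‖ ≤ C) :
    ⟪f, T f⟫_ℂ = ∫ θ, ∫ x, g θ * u (x, θ) * starRingEnd ℂ (g x) ∂μ ∂μ := by
  have hg : AEStronglyMeasurable g μ := (Lp.aestronglyMeasurable f).congr hfg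
  have hbdd : ∀ p : X × X, ‖g p.1 * starRingEnd ℂ (g p.2)‖ ≤ C * C := fun p => by
    rw [norm_mul, RCLike.norm_conj]
    exact mul_le_mul (hgC _) (hgC _) (norm_nonneg _) ((norm_nonneg _).trans (hgC p.1))
  have hint : Integrable (Function.uncurry fun θ x => g θ * u (x, θ) * starRingEnd ℂ (g x))
      (μ.prod μ) :=
    (hu.swap.bdd_mul (hg.comp_fst.mul hg.comp_snd.star) (.of_forall hbdd)).congr
      (.of_forall fun p => by
        show g p.1 * starRingEnd ℂ (g p.2) * u (p.2, p.1) = g p.1 * u (p.2, p.1) * _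
        ring)
  rw [integral_integral_swap hint, L2.inner_def]
  refine integral_congr_ae ?_
  filter_upwards [hfg, ae_eq_integral_kernel_of_ae_eq hT hfg] with x hx hTx
  rw [RCLike.inner_apply, hx, hTx, ← integral_mul_const]
  exact integral_congr_ae (Filter.Eventually.of_forall fun θ => by ring)

theorem integral_norm_sq_integral_kernel_comp_eq_norm_sq [SFinite μ] {e : X ≃ᵐ X}
    (he : MeasurePreserving e μ μ) (hrec : ∀ᵐ p ∂μ.prod μ, u p = u (e p.2, e p.1))
    (hT : ∀ f : Lp ℂ 2 μ, T f =ᵐ[μ] fun x => ∫ θ, u (x, θ) * f θ ∂μ)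
    {f : Lp ℂ 2 μ} {g : X → ℂ} (hfg : f =ᵐ[μ] g) :
    ∫ θ, ‖∫ x, u (x, θ) * g (e x) ∂μ‖ ^ 2 ∂μ = ‖T f‖ ^ 2 := by
  have hrec' : ∀ᵐ θ ∂μ, ∀ᵐ x ∂μ, u (x, θ) = u (e θ, e x) :=
    Measure.ae_ae_of_ae_prod (Measure.measurePreserving_swap.quasiMeasurePreserving.ae hrec)
  have hK : ∀ᵐ θ ∂μ, ∫ x, u (x, θ) * g (e x) ∂μ = ∫ x, u (e θ, x) * g x ∂μ := by
    filter_upwards [hrec'] with θ hθ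
    rw [← he.integral_comp e.measurableEmbedding (fun x => u (e θ, x) * g x)]
    exact integral_congr_ae (hθ.mono fun x hx => congrArg (· * g (e x)) hx)
  rw [integral_congr_ae (hK.mono fun θ hθ => congrArg (‖·‖ ^ 2) hθ),
    he.integral_comp e.measurableEmbedding (fun θ => ‖∫ x, u (θ, x) * g x ∂μ‖ ^ 2),
    Lp.norm_sq_eq_integral_norm_sq (ae_eq_integral_kernel_of_ae_eq hT hfg)]

end MeasureTheory

section PlaneWave

variable {E : Type*} [NormedAddCommGroup E] [InnerProductSpace ℝ E]

noncomputable def planeWave (k : ℝ) (z x : E) : ℂ :=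
  Complex.exp (-(Complex.I * k * (⟪x, z⟫_ℝ : ℝ)))

theorem norm_planeWave (k : ℝ) (z x : E) : ‖planeWave k z x‖ = 1 := by
  rw [planeWave, Complex.norm_exp]
  simp

theorem continuous_planeWave (k : ℝ) (z : E) : Continuous (planeWave k z) := by
  unfold planeWave
  fun_prop

theorem conj_planeWave (k : ℝ) (z x : E) :
    starRingEnd ℂ (planeWave k z x) = Complex.exp (Complex.I * k * (⟪x, z⟫_ℝ : ℝ)) := by
  rw [planeWave, ← Complex.exp_conj]
  simp

theorem planeWave_neg (k : ℝ) (z x : E) :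
    planeWave k z (-x) = Complex.exp (Complex.I * k * (⟪x, z⟫_ℝ : ℝ)) := by
  rw [planeWave, inner_neg_left]
  push_cast
  ring_nf

end PlaneWave

section Sphere

variable {E : Type*} [NormedAddCommGroup E] [NormedSpace ℝ E] [MeasurableSpace E] [BorelSpace E]

open scoped Pointwise in
theorem MeasureTheory.Measure.measurePreserving_neg_toSphere_s12 (μ : Measure E) [μ.IsNegInvariant] :
    MeasurePreserving (Homeomorph.neg (Metric.sphere (0 : E) 1)).toMeasurableEquiv
      μ.toSphere μ.toSphere := by
  refine ⟨(Homeomorph.neg _).toMeasurableEquiv.measurable, Measure.ext fun s hs => ?_⟩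
  have hpre : ⇑(Homeomorph.neg (Metric.sphere (0 : E) 1)).toMeasurableEquiv ⁻¹' s = -s :=
    Set.neg_preimage
  rw [MeasurableEquiv.map_apply, μ.toSphere_apply' hs, hpre,
    μ.toSphere_apply' (s := -s) (continuous_neg.measurable hs),
    Set.image_neg_of_apply_neg_eq_neg fun x _ => coe_neg_sphere x, Set.smul_neg,
    Measure.measure_neg]

end Sphere

instance : IsFiniteMeasure sphMeasure :=
  inferInstanceAs (IsFiniteMeasure (Measure.toSphere volume))

theorem sphMeasure_real_univ : sphMeasure.real Set.univ = 4 * Real.pi := by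
  rw [sphMeasure, Measure.toSphere_real_apply_univ, finrank_euclideanSpace_fin, measureReal_def,
    EuclideanSpace.volume_ball_fin_three, ENNReal.ofReal_one, one_pow, one_mul,
    ENNReal.toReal_ofReal (by positivity)]
  push_cast
  ring

theorem indicator_equivalence_chain_general
    (u : UnitSphere3 × UnitSphere3 → ℂ)
    (hu : MemLp u 2 (sphMeasure.prod sphMeasure))
    (hrec : ∀ᵐ p ∂(sphMeasure.prod sphMeasure), u p = u (-p.2, -p.1))
    (F : Lp ℂ 2 sphMeasure →L[ℂ] Lp ℂ 2 sphMeasure)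
    (hF : ∀ g : Lp ℂ 2 sphMeasure,
      (F g : UnitSphere3 → ℂ) =ᵐ[sphMeasure] fun x => ∫ θ : UnitSphere3, u (x, θ) * g θ ∂sphMeasure)
    (α : ℝ)
    (R : Lp ℂ 2 sphMeasure →L[ℂ] Lp ℂ 2 sphMeasure)
    (hRnonneg : ∀ g : Lp ℂ 2 sphMeasure, 0 ≤ (inner ℂ g (R g) : ℂ).re)
    (hid : F - ContinuousLinearMap.adjoint F -
        ((Complex.I * α) • ((ContinuousLinearMap.adjoint F).comp F)) =
      (2 * Complex.I) • R)
    (k : ℝ) (z : EuclideanSpace ℝ (Fin 3)) :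
    α / 2 * IOSM2 u k z ≤ (Wker u k z).im ∧
      (Wker u k z).im ≤ ‖Wker u k z‖ ∧
      ‖Wker u k z‖ ≤ 2 * Real.sqrt Real.pi * Real.sqrt (IOSM2 u k z) := by
  set e : UnitSphere3 → ℂ := fun x => planeWave k z x
  have hbound (x : UnitSphere3) : ‖e x‖ ≤ 1 := (norm_planeWave k z x).le
  have he : MemLp e 2 sphMeasure :=
    .of_bound ((continuous_planeWave k z).comp continuous_subtype_val).aestronglyMeasurable 1
      (.of_forall hbound)
  set f := he.toLp e
  have hfe : f =ᵐ[sphMeasure] e := he.coeFn_toLp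
  have hW : Wker u k z = ⟪f, F f⟫_ℂ := by
    rw [inner_apply_eq_integral_integral_kernel (hu.integrable one_le_two) hF hfe hbound]
    simp only [e, conj_planeWave]
    rfl
  have hI : IOSM2 u k z = ‖F f‖ ^ 2 := by
    have hneg : MeasurePreserving (Homeomorph.neg UnitSphere3).toMeasurableEquiv
        sphMeasure sphMeasure := volume.measurePreserving_neg_toSphere_s12
    rw [← integral_norm_sq_integral_kernel_comp_eq_norm_sq hneg hrec hF hfe]
    simp only [e, Homeomorph.toMeasurableEquiv_coe, Homeomorph.coe_neg, coe_neg_sphere,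
      planeWave_neg]
    rfl
  have hf : ‖f‖ = 2 * Real.sqrt Real.pi := by
    rw [← Real.sqrt_sq (norm_nonneg f), Lp.norm_sq_eq_integral_norm_sq hfe]
    simp only [e, norm_planeWave, one_pow, integral_const, smul_eq_mul, mul_one,
      sphMeasure_real_univ, Real.sqrt_mul' 4 Real.pi_pos.le]
    norm_num
  rw [hW, hI, Real.sqrt_sq (norm_nonneg _), ← hf]
  exact ⟨half_mul_norm_sq_le_im_inner hid (hRnonneg f), Complex.im_le_norm _,
    norm_inner_le_norm f (F f)⟩

/-- Equivalence chain (2.25) between the three sampling indicators: under the reciprocity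
relation for the kernel `u` and the operator identity `F - F* - iα F*F = 2iR` for the
associated Hilbert–Schmidt integral operator `F` (with `R` self-adjoint and nonnegative,
`α > 0`), one has `(α/2) I²_OSM(z) ≤ I_RTM(z) ≤ I_new(z) ≤ 2√π √(I²_OSM(z))` for every
sampling point `z ∈ ℝ³`. -/
theorem indicator_equivalence_chain
    (u : UnitSphere3 × UnitSphere3 → ℂ)
    (hu : MemLp u 2 (sphMeasure.prod sphMeasure))
    (hrec : ∀ᵐ p ∂(sphMeasure.prod sphMeasure), u p = u (-p.2, -p.1))
    (F : Lp ℂ 2 sphMeasure →L[ℂ] Lp ℂ 2 sphMeasure)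
    (hF : ∀ g : Lp ℂ 2 sphMeasure,
      (F g : UnitSphere3 → ℂ) =ᵐ[sphMeasure] fun x => ∫ θ : UnitSphere3, u (x, θ) * g θ ∂sphMeasure)
    (α : ℝ) (hα : 0 < α)
    (R : Lp ℂ 2 sphMeasure →L[ℂ] Lp ℂ 2 sphMeasure) (hR : IsSelfAdjoint R)
    (hRnonneg : ∀ g : Lp ℂ 2 sphMeasure, 0 ≤ (inner ℂ g (R g) : ℂ).re)
    (hid : F - ContinuousLinearMap.adjoint F -
        ((Complex.I * α) • ((ContinuousLinearMap.adjoint F).comp F)) =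
      (2 * Complex.I) • R)
    (k : ℝ) (hk : 0 < k) (z : EuclideanSpace ℝ (Fin 3)) :
    α / 2 * IOSM2 u k z ≤ (Wker u k z).im ∧
      (Wker u k z).im ≤ ‖Wker u k z‖ ∧
      ‖Wker u k z‖ ≤ 2 * Real.sqrt Real.pi * Real.sqrt (IOSM2 u k z) :=
  indicator_equivalence_chain_general u hu hrec F hF α R hRnonneg hid k z
end
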